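/- Let α > −1 be real and n an integer ≥ 0. Then for every 0 ≤ ρ ≤ 1 and 0 ≤ θ ≤ π, (1−ρ²)^α C_n^{α+3/2}(ρ cos θ) = (√π/(2 Γ(α+3/2))) Σ_l (2l+1) (p+l+3/2)_α R_n^{l,α}(ρ) P_l(cos θ), where the sum is over all integers l with 0 ≤ l ≤ n and n − l even, and p = (n−l)/2. -/

import Mathlib

/-
Cancel `(1 - ρ²)^α`, which is a factor of every `R_n^{l,α}`; what is left is an identity between
polynomials in `ρ` and `c = cos θ`. Expand the Gegenbauer polynomial into the monomials
`(2ρc)^{n-2k}`, every power `c^m` into Legendre polynomials (coefficients obtained from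
Bonnet's three-term recursion), and every `P_p^{(α, l+1/2)}(2ρ² - 1)` into powers of `ρ²`
(Chu–Vandermonde). With `p = k + t`, both sides become double sums over `k ≤ p ≤ n/2` of
multiples of `ρ^{n-2k} P_{n-2p}(c)`, and matching coefficients only takes `Γ(x + 1) = x Γ(x)`.
-/

open Real MeasureTheory

noncomputable def genBinom (a : ℝ) (p : ℕ) : ℝ :=
  (∏ j ∈ Finset.range p, (a - j)) / (Nat.factorial p : ℝ)

noncomputable def jacobiP (k : ℕ) (a b : ℝ) (x : ℝ) : ℝ :=
  ∑ j ∈ Finset.range (k + 1),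
    genBinom ((k : ℝ) + a) (k - j) * genBinom ((k : ℝ) + b) j *
      ((x - 1) / 2) ^ j * ((x + 1) / 2) ^ (k - j)

/-- generalized Pochhammer symbol `(x)_α = Γ(x+α)/Γ(x)` -/
noncomputable def pochG (x α : ℝ) : ℝ := Real.Gamma (x + α) / Real.Gamma x

/-- integer-order Pochhammer symbol `(x)_k = x(x+1)⋯(x+k−1)` -/
noncomputable def pochN (x : ℝ) (k : ℕ) : ℝ := ∏ j ∈ Finset.range k, (x + j)

/-- generalized 3D Zernike radial function `R_{l+2p}^{l,α}` -/
noncomputable def R3 (α : ℝ) (l p : ℕ) (ρ : ℝ) : ℝ :=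
  ρ ^ l * (1 - ρ ^ 2) ^ α * jacobiP p α ((l : ℝ) + 1 / 2) (2 * ρ ^ 2 - 1)

/-- generalized 2D Zernike radial function `²R_{m+2p}^{m,α}` -/
noncomputable def R2 (α : ℝ) (m p : ℕ) (ρ : ℝ) : ℝ :=
  ρ ^ m * (1 - ρ ^ 2) ^ α * jacobiP p α (m : ℝ) (2 * ρ ^ 2 - 1)

/-- spherical Bessel function of real order `a` -/
noncomputable def sphBessel (a : ℝ) (z : ℝ) : ℝ :=
  Real.sqrt π / 2 * (z / 2) ^ a *
    ∑' k : ℕ, (-(z ^ 2) / 4) ^ k / ((Nat.factorial k : ℝ) * Real.Gamma ((k : ℝ) + a + 3 / 2))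

/-- Gegenbauer polynomial `C_n^λ` -/
noncomputable def gegenbauer (n : ℕ) (lam : ℝ) (x : ℝ) : ℝ :=
  ∑ k ∈ Finset.range (n / 2 + 1),
    (-1) ^ k * Real.Gamma (((n - k : ℕ) : ℝ) + lam) /
      (Real.Gamma lam * (Nat.factorial k : ℝ) * (Nat.factorial (n - 2 * k) : ℝ)) *
      (2 * x) ^ (n - 2 * k)

/-- Legendre polynomial `P_l` -/
noncomputable def legendreFun (l : ℕ) (x : ℝ) : ℝ :=
  (1 / 2 ^ l) * ∑ k ∈ Finset.range (l + 1),
    ((Nat.choose l k : ℝ)) ^ 2 * (x - 1) ^ (l - k) * (x + 1) ^ k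

/-- associated Legendre function `P_l^m` -/
noncomputable def assocLegendre (l m : ℕ) (x : ℝ) : ℝ :=
  (1 - x ^ 2) ^ ((m : ℝ) / 2) * iteratedDeriv m (legendreFun l) x

/-- spherical harmonic `Y_l^m`, evaluated at a (unit) vector `v ∈ ℝ³`:
`cos θ = v 2`, `φ = arg (v 0 + i v 1)`. -/
noncomputable def sphHarm (l : ℕ) (m : ℤ) (v : EuclideanSpace ℝ (Fin 3)) : ℂ :=
  (-1 : ℂ) ^ m *
    (Real.sqrt ((2 * l + 1) / (4 * π) *
      (Nat.factorial (l - m.natAbs) : ℝ) / (Nat.factorial (l + m.natAbs) : ℝ)) : ℝ) *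
    (assocLegendre l m.natAbs (v 2) : ℝ) *
    Complex.exp (Complex.I * m * (Complex.arg (v 0 + Complex.I * v 1) : ℝ))

/-- generalized 3D Zernike function `Z_{nl}^{m,α}` on ℝ³ -/
noncomputable def Z3 (α : ℝ) (l p : ℕ) (m : ℤ) (ω : EuclideanSpace ℝ (Fin 3)) : ℂ :=
  (R3 α l p ‖ω‖ : ℝ) * sphHarm l m (‖ω‖⁻¹ • ω)

open Finset
open scoped Nat

lemma genBinom_eq_choose (a : ℝ) (k : ℕ) : genBinom a k = Ring.choose a k := by
  rw [Ring.choose_eq_smul, genBinom, smul_eq_mul, ← Polynomial.aeval_eq_smeval,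
    Polynomial.aeval_def, Polynomial.eval₂_eq_eval_map, descPochhammer_map,
    descPochhammer_eval_eq_prod_range, div_eq_inv_mul]

lemma Ring.add_choose_eq_sum_range {R : Type*} [CommRing R] [BinomialRing R] (x y : R) (s : ℕ) :
    Ring.choose (x + y) s = ∑ i ∈ range (s + 1), Ring.choose x i * Ring.choose y (s - i) := by
  rw [Ring.add_choose_eq s (Commute.all x y),
    Nat.sum_antidiagonal_eq_sum_range_succ (fun i j => Ring.choose x i * Ring.choose y j)]

lemma prod_range_sub_mul_Gamma (x : ℝ) (k : ℕ) (hk : 0 < x + 1 - k) :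
    (∏ j ∈ range k, (x - j)) * Gamma (x + 1 - k) = Gamma (x + 1) := by
  induction k with
  | zero => simp
  | succ k ih =>
    have hxk : 0 < x - k := by push_cast at hk; linarith
    rw [prod_range_succ, ← ih (by linarith), mul_assoc, show x + 1 - k = (x - k) + 1 by ring,
      Gamma_add_one hxk.ne']
    push_cast
    ring_nf

lemma genBinom_eq_Gamma_div (x : ℝ) (k : ℕ) (hk : 0 < x + 1 - k) :
    genBinom x k = Gamma (x + 1) / (Gamma (x + 1 - k) * k !) := by
  rw [genBinom, ← prod_range_sub_mul_Gamma x k hk]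
  have := (Gamma_pos_of_pos hk).ne'
  field_simp

lemma Ring.sum_choose_mul_choose_mul_choose {R : Type*} [CommRing R] [BinomialRing R]
    (p s : ℕ) (hs : s ≤ p) (a b : R) :
    ∑ j ∈ range (s + 1), Ring.choose ((p : R) + a) (p - j) * Ring.choose ((p : R) + b) j *
        ((p - j).choose (s - j) : R) =
      Ring.choose ((p : R) + a) (p - s) * Ring.choose ((p : R) + a + b + s) s := by
  have trinomial : ∀ j ∈ range (s + 1), Ring.choose ((p : R) + a) (p - j) *
      Ring.choose ((p : R) + b) j * ((p - j).choose (s - j) : R) =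
        Ring.choose ((p : R) + a) (p - s) *
          (Ring.choose ((p : R) + b) j * Ring.choose (a + s) (s - j)) := by
    intro j hj
    have hjs : j ≤ s := Nat.lt_succ_iff.mp (mem_range.mp hj)
    have h := Ring.choose_smul_choose ((p : R) + a) (n := p - j) (k := p - s) (by omega)
    rw [nsmul_eq_mul, Nat.choose_symm_of_eq_add (show p - j = (p - s) + (s - j) by omega),
      show p - j - (p - s) = s - j by omega, Nat.cast_sub hs] at h
    rw [show (p : R) + a - (p - s) = a + s by ring] at h
    linear_combination Ring.choose ((p : R) + b) j * h
  rw [sum_congr rfl trinomial, ← mul_sum, ← Ring.add_choose_eq_sum_range,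
    show (p : R) + b + (a + s) = p + a + b + s by ring]

lemma jacobiP_eq_sum (p : ℕ) (a b x : ℝ) :
    jacobiP p a b x = ∑ s ∈ range (p + 1),
      genBinom (p + a) (p - s) * genBinom (p + a + b + s) s * ((x - 1) / 2) ^ s := by
  set u := (x - 1) / 2
  have expand : ∀ j ∈ range (p + 1),
      genBinom (p + a) (p - j) * genBinom (p + b) j * u ^ j * ((x + 1) / 2) ^ (p - j) =
        ∑ s ∈ Ico j (p + 1), genBinom (p + a) (p - j) * genBinom (p + b) j *
          ((p - j).choose (s - j) : ℝ) * u ^ s := by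
    intro j hj
    rw [show (x + 1) / 2 = u + 1 by ring, add_pow, sum_Ico_eq_sum_range,
      show p + 1 - j = p - j + 1 by have := mem_range.mp hj; omega, mul_sum]
    refine sum_congr rfl fun i _ => ?_
    rw [show j + i - j = i by omega, pow_add]
    ring
  rw [jacobiP, sum_congr rfl expand, range_eq_Ico, sum_Ico_Ico_comm]
  refine sum_congr rfl fun s hs => ?_
  rw [← sum_mul, ← range_eq_Ico]
  simp only [genBinom_eq_choose]
  rw [Ring.sum_choose_mul_choose_mul_choose p s (by have := mem_Ico.mp hs; omega)]

lemma jacobiP_neg (p : ℕ) (a b x : ℝ) :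
    jacobiP p a b (-x) = (-1) ^ p * jacobiP p b a x := by
  rw [jacobiP, jacobiP, mul_sum, ← sum_range_reflect]
  refine sum_congr rfl fun j hj => ?_
  obtain ⟨t, rfl⟩ := Nat.exists_eq_add_of_le (Nat.lt_succ_iff.mp (mem_range.mp hj))
  rw [show j + t + 1 - 1 - j = t by omega, show j + t - t = j by omega, Nat.add_sub_cancel_left,
    show (-x - 1) / 2 = -((x + 1) / 2) by ring, show (-x + 1) / 2 = -((x - 1) / 2) by ring,
    neg_pow ((x + 1) / 2), neg_pow ((x - 1) / 2)]
  ring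

lemma jacobiP_two_mul_sub_one (p : ℕ) (a b y : ℝ) :
    jacobiP p a b (2 * y - 1) = ∑ k ∈ range (p + 1),
      (-1) ^ k * genBinom (p + b) k * genBinom (p + a + b + (p - k : ℕ)) (p - k) *
        y ^ (p - k) := by
  rw [show 2 * y - 1 = -(1 - 2 * y) by ring, jacobiP_neg, jacobiP_eq_sum, mul_sum,
    ← sum_range_reflect]
  refine sum_congr rfl fun k hk => ?_
  obtain ⟨t, rfl⟩ := Nat.exists_eq_add_of_le (Nat.lt_succ_iff.mp (mem_range.mp hk))
  rw [show k + t + 1 - 1 - k = t by omega, show k + t - t = k by omega, Nat.add_sub_cancel_left,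
    show (1 - 2 * y - 1) / 2 = -y by ring, neg_pow, add_right_comm _ b a]
  ring_nf
  simp [pow_mul']

lemma legendreFun_eq_jacobiP (l : ℕ) (x : ℝ) : legendreFun l x = jacobiP l 0 0 x := by
  rw [legendreFun, jacobiP, mul_sum, ← sum_range_reflect]
  refine sum_congr rfl fun k hk => ?_
  obtain ⟨t, rfl⟩ := Nat.exists_eq_add_of_le (Nat.lt_succ_iff.mp (mem_range.mp hk))
  rw [show k + t + 1 - 1 - k = t by omega, show k + t - t = k by omega, Nat.add_sub_cancel_left]
  simp only [add_zero, genBinom_eq_choose, Ring.choose_natCast, div_pow, pow_add]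
  rw [Nat.choose_symm_add]
  field_simp

/-- The coefficient `C(l, j) C(l + j, j)` of `((x - 1) / 2) ^ j` in `P_l(x)`, written as a
polynomial in `l` so that its recurrence in `l` holds without boundary cases. -/
noncomputable def legendreCoeff (x : ℝ) (j : ℕ) : ℝ :=
  (∏ i ∈ range (2 * j), (x + j - i)) / (j ! : ℝ) ^ 2

lemma legendreCoeff_zero_right (x : ℝ) : legendreCoeff x 0 = 1 := by
  simp [legendreCoeff]

lemma legendreCoeff_natCast_of_lt {l j : ℕ} (h : l < j) : legendreCoeff l j = 0 := by
  rw [legendreCoeff, prod_eq_zero (i := l + j) (mem_range.mpr (by omega)) (by push_cast; ring),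
    zero_div]

lemma descFactorial_add_two_mul (l j : ℕ) :
    (l + j).descFactorial (2 * j) = l.choose j * (l + j).choose j * (j ! * j !) := by
  have hc := Nat.choose_mul (n := l + j) (k := 2 * j) (s := j) (by omega)
  have hf := Nat.choose_mul_factorial_mul_factorial (n := 2 * j) (k := j) (by omega)
  rw [show 2 * j - j = j by omega] at hc hf
  rw [Nat.add_sub_cancel] at hc
  rw [Nat.descFactorial_eq_factorial_mul_choose, ← hf]
  calc (2 * j).choose j * j ! * j ! * (l + j).choose (2 * j)
      = (l + j).choose (2 * j) * (2 * j).choose j * (j ! * j !) := by ring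
    _ = l.choose j * (l + j).choose j * (j ! * j !) := by rw [hc]; ring

lemma legendreCoeff_natCast (l j : ℕ) :
    legendreCoeff l j = l.choose j * (l + j).choose j := by
  have h := congrArg (Nat.cast : ℕ → ℝ) (descFactorial_add_two_mul l j)
  rw [← descPochhammer_eval_eq_descFactorial, descPochhammer_eval_eq_prod_range] at h
  push_cast at h
  rw [legendreCoeff, h]
  field_simp

lemma legendreFun_eq_sum_legendreCoeff (l M : ℕ) (hM : l < M) (c : ℝ) :
    legendreFun l c = ∑ j ∈ range M, legendreCoeff l j * ((c - 1) / 2) ^ j := by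
  rw [legendreFun_eq_jacobiP, jacobiP_eq_sum]
  refine (sum_congr rfl fun j hj => ?_).trans
    (sum_subset (range_subset_range.mpr hM) (fun j _ hj => ?_))
  · have hjl : j ≤ l := Nat.lt_succ_iff.mp (mem_range.mp hj)
    simp only [add_zero, genBinom_eq_choose, ← Nat.cast_add, Ring.choose_natCast,
      legendreCoeff_natCast, Nat.choose_symm hjl]
  · rw [legendreCoeff_natCast_of_lt (by simpa using hj), zero_mul]

lemma legendreCoeff_recurrence (x : ℝ) (j : ℕ) :
    (x + 2) * legendreCoeff (x + 2) (j + 1) + (x + 1) * legendreCoeff x (j + 1) =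
      (2 * x + 3) * (legendreCoeff (x + 1) (j + 1) + 2 * legendreCoeff (x + 1) j) := by
  set P := ∏ i ∈ range (2 * j), (x + 1 + j - i)
  have h2 : ∏ i ∈ range (2 * (j + 1)), (x + 2 + ↑(j + 1) - i) =
      P * (x + j + 2) * (x + j + 3) := by
    rw [show 2 * (j + 1) = 2 * j + 1 + 1 by ring, prod_range_succ', prod_range_succ']
    push_cast
    rw [prod_congr rfl fun (i : ℕ) _ =>
      show x + 2 + (j + 1) - ((i : ℝ) + 1 + 1) = x + 1 + j - i by ring]
    ring
  have h0 : ∏ i ∈ range (2 * (j + 1)), (x + ↑(j + 1) - i) = P * (x - j + 1) * (x - j) := by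
    rw [show 2 * (j + 1) = 2 * j + 1 + 1 by ring, prod_range_succ, prod_range_succ]
    push_cast
    rw [prod_congr rfl fun (i : ℕ) _ => show x + (j + 1) - (i : ℝ) = x + 1 + j - i by ring]
    ring
  have h1 : ∏ i ∈ range (2 * (j + 1)), (x + 1 + ↑(j + 1) - i) =
      P * (x - j + 1) * (x + j + 2) := by
    rw [show 2 * (j + 1) = 2 * j + 1 + 1 by ring, prod_range_succ, prod_range_succ']
    push_cast
    rw [prod_congr rfl fun (i : ℕ) _ =>
      show x + 1 + (j + 1) - ((i : ℝ) + 1) = x + 1 + j - i by ring]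
    ring
  simp only [legendreCoeff, h0, h1, h2, Nat.factorial_succ]
  push_cast
  field_simp
  ring

lemma legendreFun_recurrence (l : ℕ) (c : ℝ) :
    (2 * l + 1) * c * legendreFun l c =
      (l + 1) * legendreFun (l + 1) c + l * legendreFun (l - 1) c := by
  rcases l with _ | L
  · simp [legendreFun, sum_range_succ]
    ring
  obtain ⟨v, rfl⟩ : ∃ v, c = 2 * v + 1 := ⟨(c - 1) / 2, by ring⟩
  have hv : (2 * v + 1 - 1) / 2 = v := by ring
  have expand : ∀ l, l ≤ L + 2 → legendreFun l (2 * v + 1) =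
      ∑ j ∈ range (L + 2), legendreCoeff l (j + 1) * v ^ (j + 1) + 1 := by
    intro l hl
    rw [legendreFun_eq_sum_legendreCoeff l (L + 3) (by omega), hv, sum_range_succ',
      legendreCoeff_zero_right, pow_zero, one_mul]
  have hP : legendreFun (L + 1) (2 * v + 1) =
      ∑ j ∈ range (L + 2), legendreCoeff (L + 1 : ℕ) j * v ^ j := by
    rw [legendreFun_eq_sum_legendreCoeff (L + 1) (L + 2) (by omega), hv]
  have key : (2 * L + 3 : ℝ) *
        (∑ j ∈ range (L + 2), legendreCoeff (L + 1 : ℕ) (j + 1) * v ^ (j + 1) +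
          2 * v * ∑ j ∈ range (L + 2), legendreCoeff (L + 1 : ℕ) j * v ^ j) =
      (L + 2) * ∑ j ∈ range (L + 2), legendreCoeff (L + 2 : ℕ) (j + 1) * v ^ (j + 1) +
        (L + 1) * ∑ j ∈ range (L + 2), legendreCoeff L (j + 1) * v ^ (j + 1) := by
    simp only [mul_sum, ← sum_add_distrib]
    refine sum_congr rfl fun j _ => ?_
    have h := legendreCoeff_recurrence L j
    push_cast
    linear_combination -v ^ (j + 1) * h
  rw [Nat.add_sub_cancel, show L + 1 + 1 = L + 2 from rfl,
    show (2 * ((L + 1 : ℕ) : ℝ) + 1) * (2 * v + 1) * legendreFun (L + 1) (2 * v + 1) =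
      (2 * L + 3) * (legendreFun (L + 1) (2 * v + 1) + 2 * v * legendreFun (L + 1) (2 * v + 1)) by
    push_cast; ring]
  nth_rewrite 2 [hP]
  rw [expand L (by omega), expand (L + 1) (by omega), expand (L + 2) le_rfl]
  push_cast at key ⊢
  linear_combination key

lemma Gamma_three_halves : Gamma (3 / 2) = √π / 2 := by
  rw [show (3 / 2 : ℝ) = 1 / 2 + 1 by norm_num, Gamma_add_one (by norm_num), Gamma_one_half_eq]
  ring

/-- The coefficient of `P_{m-2t}` in `x ^ m`, set to zero for `2t > m` (where the truncated
index `m - 2t : ℕ` is meaningless), so that the expansion of `x ^ m` may run over `t ≤ m`. -/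
noncomputable def legendrePowCoeff (m t : ℕ) : ℝ :=
  if 2 * t ≤ m then
    √π * (2 * (m - 2 * t : ℕ) + 1) * m ! / (2 ^ (m + 1) * t ! * Gamma ((m - t : ℕ) + 3 / 2))
  else 0

lemma legendrePowCoeff_of_lt {m t : ℕ} (h : m < 2 * t) : legendrePowCoeff m t = 0 :=
  if_neg (by omega)

lemma Gamma_natCast_add_three_halves_pos (k : ℕ) : 0 < Gamma ((k : ℝ) + 3 / 2) :=
  Gamma_pos_of_pos (by positivity)

lemma Gamma_natCast_succ_add_three_halves (k : ℕ) :
    Gamma (((k + 1 : ℕ) : ℝ) + 3 / 2) = (k + 3 / 2) * Gamma ((k : ℝ) + 3 / 2) := by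
  rw [Nat.cast_add_one, add_right_comm, Gamma_add_one (by positivity)]

lemma legendrePowCoeff_succ_zero (m : ℕ) :
    legendrePowCoeff (m + 1) 0 = legendrePowCoeff m 0 * (m + 1) / (2 * m + 1) := by
  simp only [legendrePowCoeff, zero_le, if_true, mul_zero, Nat.sub_zero, Nat.factorial_succ,
    Gamma_natCast_succ_add_three_halves]
  have := (Gamma_natCast_add_three_halves_pos m).ne'
  push_cast
  field_simp
  ring

lemma legendrePowCoeff_succ_succ (m t : ℕ) :
    legendrePowCoeff (m + 1) (t + 1) =
      legendrePowCoeff m (t + 1) * ((m - 2 * (t + 1) : ℕ) + 1) /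
          (2 * (m - 2 * (t + 1) : ℕ) + 1) +
        legendrePowCoeff m t * (m - 2 * t : ℕ) / (2 * (m - 2 * t : ℕ) + 1) := by
  rcases lt_trichotomy m (2 * t + 1) with h | rfl | h
  · rw [legendrePowCoeff_of_lt (by omega), legendrePowCoeff_of_lt (by omega),
      show m - 2 * t = 0 by omega]
    simp
  · rw [legendrePowCoeff_of_lt (m := 2 * t + 1) (t := t + 1) (by omega)]
    simp only [legendrePowCoeff, show 2 * (t + 1) ≤ 2 * t + 1 + 1 by omega,
      show 2 * t ≤ 2 * t + 1 by omega, if_true,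
      show 2 * t + 1 + 1 - 2 * (t + 1) = 0 by omega, show 2 * t + 1 + 1 - (t + 1) = t + 1 by omega,
      show 2 * t + 1 - 2 * t = 1 by omega, show 2 * t + 1 - t = t + 1 by omega,
      Nat.factorial_succ]
    have := (Gamma_natCast_add_three_halves_pos (t + 1)).ne'
    push_cast
    field_simp
    ring
  · obtain ⟨l, rfl⟩ : ∃ l, m = l + 2 * t + 2 := ⟨m - 2 * t - 2, by omega⟩
    simp only [legendrePowCoeff, show 2 * (t + 1) ≤ l + 2 * t + 2 + 1 by omega,
      show 2 * (t + 1) ≤ l + 2 * t + 2 by omega, show 2 * t ≤ l + 2 * t + 2 by omega, if_true,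
      show l + 2 * t + 2 + 1 - 2 * (t + 1) = l + 1 by omega,
      show l + 2 * t + 2 + 1 - (t + 1) = (l + t + 1) + 1 by omega,
      show l + 2 * t + 2 - 2 * (t + 1) = l by omega,
      show l + 2 * t + 2 - (t + 1) = l + t + 1 by omega,
      show l + 2 * t + 2 - 2 * t = l + 2 by omega,
      show l + 2 * t + 2 - t = (l + t + 1) + 1 by omega,
      Gamma_natCast_succ_add_three_halves, Nat.factorial_succ]
    have := (Gamma_natCast_add_three_halves_pos (l + t + 1)).ne'
    push_cast
    field_simp
    ring

lemma mul_legendrePowCoeff_mul_legendreFun (m t : ℕ) (c : ℝ) :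
    c * (legendrePowCoeff m t * legendreFun (m - 2 * t) c) =
      legendrePowCoeff m t * ((m - 2 * t : ℕ) + 1) / (2 * (m - 2 * t : ℕ) + 1) *
          legendreFun (m + 1 - 2 * t) c +
        legendrePowCoeff m t * (m - 2 * t : ℕ) / (2 * (m - 2 * t : ℕ) + 1) *
          legendreFun (m + 1 - 2 * (t + 1)) c := by
  rcases lt_or_ge m (2 * t) with h | h
  · simp [legendrePowCoeff_of_lt h]
  have hrec := legendreFun_recurrence (m - 2 * t) c
  rw [show m + 1 - 2 * t = m - 2 * t + 1 by omega,
    show m + 1 - 2 * (t + 1) = m - 2 * t - 1 by omega]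
  have : (2 * ((m - 2 * t : ℕ) : ℝ) + 1) ≠ 0 := by positivity
  field_simp
  linear_combination legendrePowCoeff m t * hrec

lemma pow_eq_sum_range_succ_legendrePowCoeff (m : ℕ) (c : ℝ) :
    c ^ m = ∑ t ∈ range (m + 1), legendrePowCoeff m t * legendreFun (m - 2 * t) c := by
  induction m with
  | zero =>
    have := Real.sqrt_pos.mpr pi_pos
    simp [legendrePowCoeff, legendreFun, Gamma_three_halves]
    field_simp
  | succ m ih =>
    set A := fun t => legendrePowCoeff m t * ((m - 2 * t : ℕ) + 1) / (2 * (m - 2 * t : ℕ) + 1) *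
      legendreFun (m + 1 - 2 * t) c
    set B := fun t => legendrePowCoeff m t * (m - 2 * t : ℕ) / (2 * (m - 2 * t : ℕ) + 1) *
      legendreFun (m + 1 - 2 * (t + 1)) c
    have hA : ∑ t ∈ range (m + 1), A t = ∑ t ∈ range (m + 1), A (t + 1) + A 0 := by
      rw [← sum_range_succ' A (m + 1), sum_range_succ A (m + 1)]
      simp [A, legendrePowCoeff_of_lt (by omega : m < 2 * (m + 1))]
    calc c ^ (m + 1) = ∑ t ∈ range (m + 1), (A t + B t) := by
          rw [pow_succ', ih, mul_sum]
          exact sum_congr rfl fun t _ => mul_legendrePowCoeff_mul_legendreFun m t c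
      _ = ∑ t ∈ range (m + 1), (A (t + 1) + B t) + A 0 := by
          rw [sum_add_distrib, sum_add_distrib, hA]
          ring
      _ = _ := by
          rw [sum_range_succ' _ (m + 1), legendrePowCoeff_succ_zero]
          congr 1
          refine sum_congr rfl fun t _ => ?_
          simp only [A, B, legendrePowCoeff_succ_succ]
          ring

lemma pow_eq_sum_legendrePowCoeff (m : ℕ) (c : ℝ) :
    c ^ m = ∑ t ∈ range (m / 2 + 1), legendrePowCoeff m t * legendreFun (m - 2 * t) c := by
  rw [pow_eq_sum_range_succ_legendrePowCoeff]
  refine (sum_subset (range_subset_range.mpr (by omega)) fun t _ ht => ?_).symm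
  rw [legendrePowCoeff_of_lt (by simp at ht; omega), zero_mul]

lemma gegenbauer_coeff_mul_legendrePowCoeff (α : ℝ) (hα : -3 / 2 < α) {n p k : ℕ}
    (hkp : k ≤ p) (hpn : 2 * p ≤ n) :
    (-1) ^ k * Gamma ((n - k : ℕ) + (α + 3 / 2)) / (Gamma (α + 3 / 2) * k ! * (n - 2 * k)!) *
        2 ^ (n - 2 * k) * legendrePowCoeff (n - 2 * k) (p - k) =
      √π / (2 * Gamma (α + 3 / 2)) * (2 * (n - 2 * p : ℕ) + 1) *
        pochG ((n - p : ℕ) + 3 / 2) α *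
          ((-1) ^ k * genBinom (p + ((n - 2 * p : ℕ) + 1 / 2)) k *
            genBinom (p + α + ((n - 2 * p : ℕ) + 1 / 2) + (p - k : ℕ)) (p - k)) := by
  obtain ⟨t, rfl⟩ := Nat.exists_eq_add_of_le hkp
  obtain ⟨l, rfl⟩ : ∃ l, n = l + 2 * k + 2 * t := ⟨n - 2 * k - 2 * t, by omega⟩
  rw [show l + 2 * k + 2 * t - k = l + k + 2 * t by omega,
    show l + 2 * k + 2 * t - 2 * k = l + 2 * t by omega,
    show l + 2 * k + 2 * t - 2 * (k + t) = l by omega,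
    show l + 2 * k + 2 * t - (k + t) = l + k + t by omega,
    Nat.add_sub_cancel_left, legendrePowCoeff, if_pos (by omega), Nat.add_sub_cancel,
    show l + 2 * t - t = l + t by omega, pochG]
  have hl : (0 : ℝ) ≤ l := by positivity
  have hk : (0 : ℝ) ≤ k := by positivity
  have ht : (0 : ℝ) ≤ t := by positivity
  rw [genBinom_eq_Gamma_div _ _ (by push_cast; linarith),
    genBinom_eq_Gamma_div _ _ (by push_cast; linarith)]
  push_cast
  rw [show (k : ℝ) + t + (l + 1 / 2) + 1 - k = l + t + 3 / 2 by ring,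
    show (k : ℝ) + t + (l + 1 / 2) + 1 = l + k + t + 3 / 2 by ring,
    show (k : ℝ) + t + α + (l + 1 / 2) + t + 1 - t = l + k + t + 3 / 2 + α by ring,
    show (k : ℝ) + t + α + (l + 1 / 2) + t + 1 = l + k + 2 * t + (α + 3 / 2) by ring]
  have h₁ := (Gamma_pos_of_pos (show 0 < α + 3 / 2 by linarith)).ne'
  have h₂ := (Gamma_pos_of_pos (show 0 < (l : ℝ) + t + 3 / 2 by linarith)).ne'
  have h₃ := (Gamma_pos_of_pos (show 0 < (l : ℝ) + k + t + 3 / 2 by linarith)).ne'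
  have h₄ := (Gamma_pos_of_pos (show 0 < (l : ℝ) + k + t + 3 / 2 + α by linarith)).ne'
  generalize Gamma (α + 3 / 2) = g₁ at *
  generalize Gamma ((l : ℝ) + t + 3 / 2) = g₂ at *
  generalize Gamma ((l : ℝ) + k + t + 3 / 2) = g₃ at *
  generalize Gamma ((l : ℝ) + k + t + 3 / 2 + α) = g₄ at *
  field_simp
  ring

lemma gegenbauer_eq_sum_jacobiP_mul_legendreFun (α : ℝ) (hα : -3 / 2 < α) (n : ℕ)
    (ρ c : ℝ) :
    gegenbauer n (α + 3 / 2) (ρ * c) = √π / (2 * Gamma (α + 3 / 2)) *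
      ∑ p ∈ range (n / 2 + 1),
        (2 * ((n - 2 * p : ℕ) : ℝ) + 1) * pochG ((n - p : ℕ) + 3 / 2) α * ρ ^ (n - 2 * p) *
          jacobiP p α ((n - 2 * p : ℕ) + 1 / 2) (2 * ρ ^ 2 - 1) *
          legendreFun (n - 2 * p) c := by
  set a : ℕ → ℝ := fun k => (-1) ^ k * Gamma ((n - k : ℕ) + (α + 3 / 2)) /
    (Gamma (α + 3 / 2) * k ! * (n - 2 * k)!) * 2 ^ (n - 2 * k)
  have expand : ∀ k ∈ range (n / 2 + 1),
      (-1) ^ k * Gamma ((n - k : ℕ) + (α + 3 / 2)) / (Gamma (α + 3 / 2) * k ! * (n - 2 * k)!) *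
        (2 * (ρ * c)) ^ (n - 2 * k) = ∑ t ∈ range (n / 2 + 1 - k),
          a k * legendrePowCoeff (n - 2 * k) t * ρ ^ (n - 2 * k) *
            legendreFun (n - 2 * k - 2 * t) c := by
    intro k hk
    rw [mul_pow, mul_pow, pow_eq_sum_legendrePowCoeff (n - 2 * k) c,
      show (n - 2 * k) / 2 + 1 = n / 2 + 1 - k by have := mem_range.mp hk; omega]
    simp only [mul_sum]
    exact sum_congr rfl fun t _ => by ring
  rw [gegenbauer, sum_congr rfl expand, ← sum_range_diag_flip, mul_sum]
  refine sum_congr rfl fun p hp => ?_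
  have hpn : 2 * p ≤ n := by have := mem_range.mp hp; omega
  simp only [jacobiP_two_mul_sub_one, mul_sum, sum_mul]
  refine sum_congr rfl fun k hk => ?_
  have hkp : k ≤ p := Nat.lt_succ_iff.mp (mem_range.mp hk)
  have hcoeff := gegenbauer_coeff_mul_legendrePowCoeff α hα hkp hpn
  rw [show n - 2 * k - 2 * (p - k) = n - 2 * p by omega,
    show ρ ^ (n - 2 * k) = ρ ^ (n - 2 * p) * (ρ ^ 2) ^ (p - k) by
      rw [← pow_mul, ← pow_add]; congr 1; omega]
  simp only [a]
  linear_combination ρ ^ (n - 2 * p) * (ρ ^ 2) ^ (p - k) * legendreFun (n - 2 * p) c * hcoeff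

/-- The paper's sum over `l ≤ n` with `n - l` even is indexed by `p = (n - l) / 2`, so that
`l = n - 2p` and `p + l = n - p`. -/
theorem stmt10_general (α : ℝ) (hα : -1 < α) (n : ℕ) (ρ θ : ℝ) :
    (1 - ρ ^ 2) ^ α * gegenbauer n (α + 3 / 2) (ρ * Real.cos θ)
      = Real.sqrt π / (2 * Real.Gamma (α + 3 / 2)) *
          ∑ p ∈ Finset.range (n / 2 + 1),
            (2 * ((n - 2 * p : ℕ) : ℝ) + 1) * pochG (((n - p : ℕ) : ℝ) + 3 / 2) α *
              R3 α (n - 2 * p) p ρ * legendreFun (n - 2 * p) (Real.cos θ) := by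
  rw [gegenbauer_eq_sum_jacobiP_mul_legendreFun α (by linarith) n ρ (cos θ), mul_left_comm,
    mul_sum]
  congr 1
  refine sum_congr rfl fun p _ => ?_
  rw [R3]
  ring

/-- the expansion
`(1−ρ²)^α C_n^{α+3/2}(ρ cos θ) = (√π/(2Γ(α+3/2))) Σ_l (2l+1)(p+l+3/2)_α R_n^{l,α}(ρ) P_l(cos θ)`,
where the sum is over `0 ≤ l ≤ n` with `n − l` even; writing `l = n − 2p`, the sum runs over
`p = 0, 1, …, ⌊n/2⌋` and `p + l = n − p`. -/
theorem stmt10 (α : ℝ) (hα : -1 < α) (n : ℕ) (ρ θ : ℝ)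
    (hρ : ρ ∈ Set.Icc (0:ℝ) 1) (hθ : θ ∈ Set.Icc (0:ℝ) π) :
    (1 - ρ ^ 2) ^ α * gegenbauer n (α + 3 / 2) (ρ * Real.cos θ)
      = Real.sqrt π / (2 * Real.Gamma (α + 3 / 2)) *
          ∑ p ∈ Finset.range (n / 2 + 1),
            (2 * ((n - 2 * p : ℕ) : ℝ) + 1) * pochG (((n - p : ℕ) : ℝ) + 3 / 2) α *
              R3 α (n - 2 * p) p ρ * legendreFun (n - 2 * p) (Real.cos θ) :=
  stmt10_general α hα n ρ θ
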